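/- Let (K, r_n) be a pre-extender on an n-maniplex K. If K is polytopal, then the universal Cayley extension U(K, r_n) is polytopal. -/

import Mathlib

/-! ## Basic notions: maniplexes, premaniplexes, orbits, automorphisms -/

/-- One monodromy step using an index satisfying `P`. -/
def StepOn {K : Type*} {n : ℕ} (r : Fin n → K → K) (P : Fin n → Prop) (x y : K) : Prop :=
  ∃ i, P i ∧ r i x = y

/-- `y` is reachable from `x` by monodromies whose index satisfies `P`;
this is the orbit relation of the subgroup generated by those monodromies. -/
def ReachOn {K : Type*} {n : ℕ} (r : Fin n → K → K) (P : Fin n → Prop) : K → K → Prop :=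
  Relation.ReflTransGen (StepOn r P)

/-- Orbit relation of the full monodromy group. -/
def ConnRel {K : Type*} {n : ℕ} (r : Fin n → K → K) : K → K → Prop :=
  ReachOn r fun _ => True

/-- Same facet: orbit relation of `r_0, …, r_{n-2}`. -/
def FacetRel {K : Type*} {n : ℕ} (r : Fin n → K → K) : K → K → Prop :=
  ReachOn r fun i => (i : ℕ) + 1 < n

/-- Same vertex: orbit relation of `r_1, …, r_{n-1}`. -/
def VertexRel {K : Type*} {n : ℕ} (r : Fin n → K → K) : K → K → Prop :=
  ReachOn r fun i => 1 ≤ (i : ℕ)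

/-- An `n`-maniplex on the flag set `K`, given by its monodromies `r_0, …, r_{n-1}`. -/
structure IsManiplex {K : Type*} (n : ℕ) (r : Fin n → K → K) : Prop where
  nonempty : Nonempty K
  invol : ∀ i, Function.Involutive (r i)
  fixfree : ∀ (i : Fin n) (x : K), r i x ≠ x
  fixfree₂ : ∀ (i j : Fin n), i ≠ j → ∀ x : K, r i (r j x) ≠ x
  sq : ∀ (i j : Fin n), 2 ≤ |(i : ℤ) - (j : ℤ)| → ∀ x : K, r i (r j (r i (r j x))) = x
  conn : ∀ x y : K, ConnRel r x y

/-- A premaniplex of rank `n` (fixed points allowed, connectivity not required). -/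
structure IsPremaniplex {K : Type*} (n : ℕ) (r : Fin n → K → K) : Prop where
  invol : ∀ i, Function.Involutive (r i)
  sq : ∀ (i j : Fin n), 2 ≤ |(i : ℤ) - (j : ℤ)| → ∀ x : K, r i (r j (r i (r j x))) = x

/-- The automorphism group: permutations of the flags commuting with every monodromy. -/
def autGroup {K : Type*} {n : ℕ} (r : Fin n → K → K) : Subgroup (Equiv.Perm K) where
  carrier := {τ : Equiv.Perm K | ∀ (i : Fin n) (x : K), τ (r i x) = r i (τ x)}
  one_mem' := by intro i x; rfl
  mul_mem' := by
    intro a b ha hb i x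
    simp only [Set.mem_setOf_eq] at ha hb ⊢
    simp only [Equiv.Perm.mul_apply]
    rw [hb i x, ha i (b x)]
  inv_mem' := by
    intro a ha i x
    simp only [Set.mem_setOf_eq] at ha ⊢
    have h := ha i (a⁻¹ x)
    rw [Equiv.Perm.coe_inv, Equiv.apply_symm_apply] at h
    rw [← h, Equiv.Perm.coe_inv, Equiv.symm_apply_apply]

/-- A pre-extender: an involutory permutation `rn` of the flags of the `n`-maniplex `(K, r)`
commuting with `r_0, …, r_{n-2}`. -/
structure IsPreExtender {K : Type*} {n : ℕ} (r : Fin n → K → K) (rn : K → K) : Prop where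
  maniplex : IsManiplex n r
  rn_invol : Function.Involutive rn
  rn_comm : ∀ i : Fin n, (i : ℕ) + 1 < n → ∀ x : K, rn (r i x) = r i (rn x)

/-- A Cayley extender `(K, rn, ξ)` with voltage group `G`; the voltage is encoded as a
function on flags which is constant on facets. -/
structure IsCayleyExtender {K : Type*} {G : Type*} [Group G] {n : ℕ}
    (r : Fin n → K → K) (rn : K → K) (ξ : K → G) : Prop where
  maniplex : IsManiplex n r
  rn_invol : Function.Involutive rn
  rn_comm : ∀ i : Fin n, (i : ℕ) + 1 < n → ∀ x : K, rn (r i x) = r i (rn x)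
  const : ∀ Φ Ψ : K, FacetRel r Φ Ψ → ξ Φ = ξ Ψ
  voltage_inv : ∀ Φ : K, ξ (rn Φ) = (ξ Φ)⁻¹

/-- A Cayley coextender `(K, r_{-1}, ξ')` with voltage group `G'`; the voltage is encoded as
a function on flags which is constant on vertices. -/
structure IsCayleyCoextender {K : Type*} {G' : Type*} [Group G'] {n : ℕ}
    (r : Fin n → K → K) (rm : K → K) (ξ' : K → G') : Prop where
  maniplex : IsManiplex n r
  rm_invol : Function.Involutive rm
  rm_comm : ∀ i : Fin n, 1 ≤ (i : ℕ) → ∀ x : K, rm (r i x) = r i (rm x)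
  const : ∀ Φ Ψ : K, VertexRel r Φ Ψ → ξ' Φ = ξ' Ψ
  voltage_inv : ∀ Φ : K, ξ' (rm Φ) = (ξ' Φ)⁻¹

/-- Monodromies of the derived graph `K_{rn}^ξ` on flag set `K × G`. -/
def derivedMono {K : Type*} {G : Type*} [Group G] {n : ℕ}
    (r : Fin n → K → K) (rn : K → K) (ξ : K → G) : Fin (n + 1) → K × G → K × G :=
  fun i p =>
    if h : (i : ℕ) < n then (r ⟨(i : ℕ), h⟩ p.1, p.2) else (rn p.1, ξ p.1 * p.2)

/-- Monodromies of the derived graph `K_{r_{-1}}^{ξ'}` of a coextender, on flag set `K × G'`. -/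
def coderivedMono {K : Type*} {G' : Type*} [Group G'] {n : ℕ}
    (r : Fin n → K → K) (rm : K → K) (ξ' : K → G') : Fin (n + 1) → K × G' → K × G' :=
  fun i p =>
    if _h : (i : ℕ) = 0 then (rm p.1, ξ' p.1 * p.2)
    else (r ⟨(i : ℕ) - 1, by have := i.isLt; omega⟩ p.1, p.2)

/-- Monodromies of the flat amalgamation, on flag set `K × G' × G`. -/
def amalgMono {K : Type*} {G' : Type*} {G : Type*} [Group G'] [Group G] {n : ℕ}
    (r : Fin n → K → K) (rm : K → K) (rn : K → K) (ξ' : K → G') (ξ : K → G) :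
    Fin (n + 2) → K × G' × G → K × G' × G :=
  fun i p =>
    if _h0 : (i : ℕ) = 0 then (rm p.1, ξ' p.1 * p.2.1, p.2.2)
    else if _hn : (i : ℕ) = n + 1 then (rn p.1, p.2.1, ξ p.1 * p.2.2)
    else (r ⟨(i : ℕ) - 1, by have := i.isLt; omega⟩ p.1, p.2.1, p.2.2)

/-- The path intersection property characterizing flag graphs of polytopes. -/
def IsPolytopal {K : Type*} {m : ℕ} (t : Fin m → K → K) : Prop :=
  ∀ (x y : K) (k l : ℕ), k ≤ l → l < m →
    ReachOn t (fun i => k ≤ (i : ℕ)) x y →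
    ReachOn t (fun i => (i : ℕ) ≤ l) x y →
    ReachOn t (fun i => k ≤ (i : ℕ) ∧ (i : ℕ) ≤ l) x y

/-- `S` is an `(rn, rn')`-friendly set: for every flag `Φ` and `τ ∈ S` there is `σ ∈ S`
with `rn'(Φτ) = (rn Φ)σ` (automorphisms act on the right, i.e. by function application). -/
def FriendlySet {K : Type*} (rn rn' : K → K) (S : Set (Equiv.Perm K)) : Prop :=
  ∀ Φ : K, ∀ τ ∈ S, ∃ σ ∈ S, rn' (τ Φ) = σ (rn Φ)

/-- `♥(K, rn)`: the union of all `rn`-friendly subsets of `Aut(K)`. -/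
def heartSet {K : Type*} {n : ℕ} (r : Fin n → K → K) (rn : K → K) : Set (Equiv.Perm K) :=
  ⋃₀ {S : Set (Equiv.Perm K) | S ⊆ ↑(autGroup r) ∧ FriendlySet rn rn S}

/-- Relations of the universal voltage group `G(K, rn)`: one generator per flag, generators of
flags in the same facet are identified, and `α_F · α_{rn F} = 1`. -/
def UnivRels {K : Type*} {n : ℕ} (r : Fin n → K → K) (rn : K → K) : Set (FreeGroup K) :=
  {w | ∃ Φ Ψ : K, FacetRel r Φ Ψ ∧ w = FreeGroup.of Φ * (FreeGroup.of Ψ)⁻¹} ∪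
    {w | ∃ Φ : K, w = FreeGroup.of Φ * FreeGroup.of (rn Φ)}

/-- The universal voltage assignment `Φ ↦ α_{F_Φ}` into `G(K, rn)`. -/
def univVoltage {K : Type*} {n : ℕ} (r : Fin n → K → K) (rn : K → K) :
    K → PresentedGroup (UnivRels r rn) :=
  fun Φ => PresentedGroup.of Φ

namespace St9
variable {K : Type*} {n : ℕ} {r : Fin n → K → K} {P Q : Fin n → Prop}
theorem reach_mono (h : ∀ i, P i → Q i) {x y : K} (hxy : ReachOn r P x y) :
    ReachOn r Q x y :=
  Relation.ReflTransGen.mono (r := StepOn r P) (p := StepOn r Q)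
    (fun _ _ ⟨i, hi, he⟩ => ⟨i, h i hi, he⟩) x y hxy
theorem reach_trans {x y z : K} (h1 : ReachOn r P x y) (h2 : ReachOn r P y z) :
    ReachOn r P x z := Relation.ReflTransGen.trans h1 h2
theorem reach_refl {x : K} : ReachOn r P x x := Relation.ReflTransGen.refl
theorem reach_symm (hinv : ∀ i, P i → Function.Involutive (r i)) {x y : K}
    (h : ReachOn r P x y) : ReachOn r P y x := by
  induction h with
  | refl => exact reach_refl
  | tail hab step ih =>
    obtain ⟨i, hi, he⟩ := step
    exact Relation.ReflTransGen.head ⟨i, hi, by rw [← he]; exact hinv i hi _⟩ ih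
theorem reach_map {f : K → K} (hf : ∀ i, P i → ∀ x, f (r i x) = r i (f x)) {x y : K}
    (h : ReachOn r P x y) : ReachOn r P (f x) (f y) := by
  induction h with
  | refl => exact reach_refl
  | tail _ step ih =>
    obtain ⟨i, hi, he⟩ := step
    exact ih.tail ⟨i, hi, by rw [← hf i hi, he]⟩

theorem reach_single {x : K} {i : Fin n} (hi : P i) : ReachOn r P x (r i x) :=
  Relation.ReflTransGen.single ⟨i, hi, rfl⟩

theorem reach_orbit_single (hinv : ∀ i, Function.Involutive (r i)) {i0 : Fin n}
    (hP : ∀ i, P i → i = i0) {x y : K} (h : ReachOn r P x y) : y = x ∨ y = r i0 x := by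
  induction h with
  | refl => exact .inl rfl
  | tail _ step ih =>
    obtain ⟨i, hi, he⟩ := step
    rcases ih with h1 | h1
    · right; rw [← he, h1, hP i hi]
    · left; rw [← he, h1, hP i hi]; exact hinv i0 x

/-! ### Facet relation basics -/


section Facet
variable {rn : K → K}

/-- The relation whose classes are `F ∪ rn F`. -/
def cRel (r : Fin n → K → K) (rn : K → K) (x y : K) : Prop :=
  FacetRel r x y ∨ FacetRel r x (rn y)

variable (hpre : IsPreExtender r rn)

include hpre

theorem facet_symm {x y : K} (h : FacetRel r x y) : FacetRel r y x :=
  reach_symm (fun i _ => hpre.maniplex.invol i) h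

theorem facet_rn {x y : K} (h : FacetRel r x y) : FacetRel r (rn x) (rn y) :=
  reach_map (fun i hi x => hpre.rn_comm i hi x) h

omit hpre in
theorem cRel_refl (x : K) : cRel r rn x x := .inl reach_refl

theorem cRel_symm {x y : K} : cRel r rn x y → cRel r rn y x := by
  rintro (h | h)
  · exact .inl (facet_symm hpre h)
  · right
    have := facet_rn hpre h
    rw [hpre.rn_invol y] at this
    exact facet_symm hpre this

theorem cRel_trans {x y z : K} : cRel r rn x y → cRel r rn y z → cRel r rn x z := by
  rintro (h1 | h1) (h2 | h2)
  · exact .inl (reach_trans h1 h2)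
  · exact .inr (reach_trans h1 h2)
  · exact .inr (reach_trans h1 (facet_rn hpre h2))
  · left
    refine reach_trans h1 ?_
    have := facet_rn hpre h2
    rwa [hpre.rn_invol z] at this

omit hpre

/-- The setoid of `rn`-paired facets. -/
def cSetoid (hpre : IsPreExtender r rn) : Setoid K :=
  ⟨cRel r rn, ⟨fun x => cRel_refl x, fun h => cRel_symm hpre h,
    fun h1 h2 => cRel_trans hpre h1 h2⟩⟩

/-- The class of a flag. -/
def cls (hpre : IsPreExtender r rn) (Φ : K) : Quotient (cSetoid hpre) :=
  Quotient.mk (cSetoid hpre) Φ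

include hpre

theorem cls_eq_iff {Φ Ψ : K} : cls hpre Φ = cls hpre Ψ ↔ cRel r rn Φ Ψ := by
  constructor
  · intro h
    exact Quotient.exact h
  · intro h
    exact Quot.sound h

theorem cls_rn (Φ : K) : cls hpre (rn Φ) = cls hpre Φ := by
  refine cls_eq_iff hpre |>.2 (.inr ?_)
  exact reach_refl

theorem cls_facet {Φ Ψ : K} (h : FacetRel r Φ Ψ) : cls hpre Φ = cls hpre Ψ :=
  (cls_eq_iff hpre).2 (.inl h)

theorem flip_congr {Φ Ψ : K} (h : cRel r rn Φ Ψ)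
    (hΨ : FacetRel r Ψ (rn Ψ)) : FacetRel r Φ (rn Φ) := by
  rcases h with h | h
  · refine reach_trans h (reach_trans hΨ ?_)
    exact facet_rn hpre (facet_symm hpre h)
  · have hΦΨ : FacetRel r Φ Ψ := reach_trans h (facet_symm hpre hΨ)
    have h3 : FacetRel r (rn Φ) Ψ := by
      have := facet_rn hpre h
      rwa [hpre.rn_invol] at this
    exact reach_trans hΦΨ (facet_symm hpre h3)

omit hpre

open Classical in
/-- Order parameter of a class: 2 for flip classes, 0 otherwise. -/
noncomputable def dd (hpre : IsPreExtender r rn) : Quotient (cSetoid hpre) → ℕ :=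
  Quotient.lift (fun Φ => if FacetRel r Φ (rn Φ) then 2 else 0) (by
    intro a b hab
    have hab' : cRel r rn a b := hab
    by_cases h1 : FacetRel r a (rn a) <;> by_cases h2 : FacetRel r b (rn b)
    · rw [if_pos h1, if_pos h2]
    · exact absurd (flip_congr hpre (cRel_symm hpre hab') h1) h2
    · exact absurd (flip_congr hpre hab' h2) h1
    · rw [if_neg h1, if_neg h2])

open Classical in
theorem dd_mk (hpre : IsPreExtender r rn) (Φ : K) :
    dd hpre (cls hpre Φ) = if FacetRel r Φ (rn Φ) then 2 else 0 := rfl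

/-- A chosen representative of the class of `Φ`. -/
noncomputable def rep (hpre : IsPreExtender r rn) (Φ : K) : K := (cls hpre Φ).out

theorem cls_rep (hpre : IsPreExtender r rn) (Φ : K) :
    cls hpre (rep hpre Φ) = cls hpre Φ := Quotient.out_eq _

theorem rep_congr (hpre : IsPreExtender r rn) {Φ Ψ : K} (h : cls hpre Φ = cls hpre Ψ) :
    rep hpre Φ = rep hpre Ψ := by
  unfold rep; rw [h]

open Classical in
/-- Orientation of a flag within its class. -/
noncomputable def eps (hpre : IsPreExtender r rn) (Φ : K) : ℤ :=
  if FacetRel r Φ (rep hpre Φ) then 1 else -1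

theorem eps_mem (hpre : IsPreExtender r rn) (Φ : K) :
    eps hpre Φ = 1 ∨ eps hpre Φ = -1 := by
  unfold eps; split
  exacts [Or.inl rfl, Or.inr rfl]

include hpre

theorem eps_facet {Φ Ψ : K} (h : FacetRel r Φ Ψ) : eps hpre Φ = eps hpre Ψ := by
  unfold eps
  rw [rep_congr hpre (cls_facet hpre h)]
  split_ifs with hA hB
  · rfl
  · exact absurd (reach_trans (facet_symm hpre h) hA) ‹¬_›
  · exact absurd (reach_trans h ‹FacetRel r Ψ (rep hpre Ψ)›) hA
  · rfl

theorem eps_rn_nonflip {Φ : K} (hnf : ¬ FacetRel r Φ (rn Φ)) :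
    eps hpre (rn Φ) = - eps hpre Φ := by
  have hrep : rep hpre (rn Φ) = rep hpre Φ := rep_congr hpre (cls_rn hpre Φ)
  have hco : cRel r rn Φ (rep hpre Φ) :=
    cRel_symm hpre ((cls_eq_iff hpre).1 (cls_rep hpre Φ))
  unfold eps
  rw [hrep]
  split_ifs with hA hB
  · exact absurd (reach_trans ‹FacetRel r Φ (rep hpre Φ)› (facet_symm hpre hA)) hnf
  · norm_num
  · rfl
  · exfalso
    rcases hco with h1 | h1
    · exact absurd h1 ‹¬_›
    · refine hA ?_
      have := facet_rn hpre h1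
      rwa [hpre.rn_invol] at this

end Facet

/-! ### The comparison free product and voltages -/

section Volt
open Monoid
variable {rn : K → K}

/-- Factor groups of the comparison free product. -/
abbrev Mfam (hpre : IsPreExtender r rn) (c : Quotient (cSetoid hpre)) : Type _ :=
  Multiplicative (ZMod (dd hpre c))

/-- Generator at class `c` with exponent `z`. -/
noncomputable def voltC (hpre : IsPreExtender r rn) (c : Quotient (cSetoid hpre)) (z : ℤ) :
    CoprodI (Mfam hpre) :=
  CoprodI.of (Multiplicative.ofAdd ((z : ZMod (dd hpre c))))

/-- The comparison voltage of a flag. -/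
noncomputable def volt (hpre : IsPreExtender r rn) (Φ : K) : CoprodI (Mfam hpre) :=
  voltC hpre (cls hpre Φ) (eps hpre Φ)

theorem voltC_mul (hpre : IsPreExtender r rn) (c : Quotient (cSetoid hpre)) (z1 z2 : ℤ) :
    voltC hpre c z1 * voltC hpre c z2 = voltC hpre c (z1 + z2) := by
  unfold voltC
  rw [← MonoidHom.map_mul, ← ofAdd_add, ← Int.cast_add]

theorem voltC_eq_one_iff (hpre : IsPreExtender r rn) (c : Quotient (cSetoid hpre)) (z : ℤ) :
    voltC hpre c z = 1 ↔ (dd hpre c : ℤ) ∣ z := by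
  unfold voltC
  rw [show (1 : CoprodI (Mfam hpre)) = CoprodI.of (1 : Mfam hpre c) from (map_one _).symm,
    (CoprodI.of_injective c).eq_iff, ofAdd_eq_one, ZMod.intCast_zmod_eq_zero_iff_dvd]

variable (hpre : IsPreExtender r rn)
include hpre

theorem volt_facet {Φ Ψ : K} (h : FacetRel r Φ Ψ) : volt hpre Φ = volt hpre Ψ := by
  unfold volt
  rw [cls_facet hpre h, eps_facet hpre h]

theorem volt_rn_mul (Φ : K) : volt hpre Φ * volt hpre (rn Φ) = 1 := by
  unfold volt
  rw [cls_rn hpre Φ, voltC_mul, voltC_eq_one_iff]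
  by_cases hf : FacetRel r Φ (rn Φ)
  · rw [dd_mk hpre, if_pos hf]
    rcases eps_mem hpre Φ with h1 | h1 <;> rcases eps_mem hpre (rn Φ) with h2 | h2 <;>
      rw [h1, h2] <;> decide
  · rw [eps_rn_nonflip hpre hf]
    simp

theorem volt_ne_one (Φ : K) : volt hpre Φ ≠ 1 := by
  unfold volt
  intro hdvd
  rw [voltC_eq_one_iff] at hdvd
  by_cases hf : FacetRel r Φ (rn Φ) <;>
    [rw [dd_mk hpre, if_pos hf] at hdvd; rw [dd_mk hpre, if_neg hf] at hdvd] <;>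
    rcases eps_mem hpre Φ with h1 | h1 <;> rw [h1] at hdvd <;> omega

/-- Cancellation detection: if two comparison voltages multiply to `1`, then the
first flag lies in the facet of the `rn`-image of the second. -/
theorem volt_cancel {Φ Ψ : K} (h : volt hpre Φ * volt hpre Ψ = 1) :
    FacetRel r Φ (rn Ψ) := by
  by_cases hc : cls hpre Φ = cls hpre Ψ
  · have h2 : voltC hpre (cls hpre Ψ) (eps hpre Φ + eps hpre Ψ) = 1 := by
      rw [← voltC_mul]
      unfold volt at h
      rw [hc] at h
      exact h
    rw [voltC_eq_one_iff] at h2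
    have hcr : cRel r rn Φ Ψ := (cls_eq_iff hpre).1 hc
    by_cases hf : FacetRel r Ψ (rn Ψ)
    · rcases hcr with h3 | h3
      · exact reach_trans h3 hf
      · exact h3
    · rw [dd_mk hpre, if_neg hf] at h2
      have hsum : eps hpre Φ + eps hpre Ψ = 0 := by
        simpa using h2
      rcases hcr with h3 | h3
      · exfalso
        have := eps_facet hpre h3
        rcases eps_mem hpre Ψ with h1 | h1 <;> omega
      · exact h3
  · exfalso
    -- build a two-letter reduced word
    classical
    let w : CoprodI.Word (Mfam hpre) :=
      { toList := [⟨cls hpre Φ, Multiplicative.ofAdd ((eps hpre Φ : ZMod (dd hpre (cls hpre Φ))))⟩,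
          ⟨cls hpre Ψ, Multiplicative.ofAdd ((eps hpre Ψ : ZMod (dd hpre (cls hpre Ψ))))⟩]
        ne_one := by
          intro l hl
          simp only [List.mem_cons, List.not_mem_nil, or_false] at hl
          rcases hl with hl | hl
          · subst hl
            intro h1
            exact volt_ne_one hpre Φ (by
              unfold volt voltC
              rw [show Multiplicative.ofAdd ((eps hpre Φ : ZMod (dd hpre (cls hpre Φ)))) = 1
                from h1, map_one])
          · subst hl
            intro h1
            exact volt_ne_one hpre Ψ (by
              unfold volt voltC
              rw [show Multiplicative.ofAdd ((eps hpre Ψ : ZMod (dd hpre (cls hpre Ψ)))) = 1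
                from h1, map_one])
        chain_ne := by
          refine List.isChain_cons_cons.2 ⟨hc, List.isChain_singleton _⟩ }
    have hw : w.prod = 1 := by
      show CoprodI.of _ * (CoprodI.of _ * 1) = 1
      rw [mul_one]
      exact h
    have := CoprodI.Word.equiv (M := Mfam hpre) |>.symm.injective
      (a₁ := w) (a₂ := CoprodI.Word.empty)
    have hemp : w = CoprodI.Word.empty := by
      apply this
      show w.prod = CoprodI.Word.empty.prod
      rw [hw, CoprodI.Word.prod_empty]
    have : w.toList = [] := by rw [hemp]; rfl
    simp [w] at this

end Volt

/-! ### Extraction of a cancelling pair -/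

section Extract
open Monoid
variable {rn : K → K} (hpre : IsPreExtender r rn)

theorem ofAdd_cast_eq_one_iff (c : Quotient (cSetoid hpre)) (z : ℤ) :
    (Multiplicative.ofAdd ((z : ZMod (dd hpre c))) = (1 : Mfam hpre c)) ↔
      (dd hpre c : ℤ) ∣ z := by
  rw [ofAdd_eq_one, ZMod.intCast_zmod_eq_zero_iff_dvd]

include hpre in
theorem volt_head_eq (Φ : K) :
    volt hpre Φ = CoprodI.of (M := Mfam hpre)
      (Multiplicative.ofAdd ((eps hpre Φ : ZMod (dd hpre (cls hpre Φ))))) := rfl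

theorem nep (hpre : IsPreExtender r rn) : ∀ (L : List K) (Θ : K),
    (∀ (A : List K) (a b : K) (B : List K),
        (Θ :: L : List K) = A ++ a :: b :: B → volt hpre a * volt hpre b ≠ 1) →
    ∃ (tail : List (Σ c, Mfam hpre c)) (t : ℤ),
      1 ≤ t ∧
      (∀ l ∈ tail, l.2 ≠ 1) ∧
      List.Chain' (fun l l' : Σ c, Mfam hpre c => l.1 ≠ l'.1)
        (⟨cls hpre Θ,
          Multiplicative.ofAdd ((↑(t * eps hpre Θ) : ZMod (dd hpre (cls hpre Θ))))⟩ :: tail) ∧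
      (Multiplicative.ofAdd ((↑(t * eps hpre Θ) : ZMod (dd hpre (cls hpre Θ)))) ≠
        (1 : Mfam hpre (cls hpre Θ))) ∧
      (((⟨cls hpre Θ,
          Multiplicative.ofAdd ((↑(t * eps hpre Θ) : ZMod (dd hpre (cls hpre Θ))))⟩ :: tail).map
            fun l => CoprodI.of l.2).prod = ((Θ :: L).map (volt hpre)).prod) := by
  intro L
  induction L with
  | nil =>
    intro Θ _
    refine ⟨[], 1, le_refl 1, by simp, List.isChain_singleton _, ?_, ?_⟩
    · rw [one_mul]
      intro h
      have hdvd := (ofAdd_cast_eq_one_iff hpre _ _).1 h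
      by_cases hf : FacetRel r Θ (rn Θ) <;>
        [rw [dd_mk hpre, if_pos hf] at hdvd; rw [dd_mk hpre, if_neg hf] at hdvd] <;>
        rcases eps_mem hpre Θ with h1 | h1 <;> rw [h1] at hdvd <;> norm_num at hdvd
    · simp only [one_mul, List.map_cons, List.map_nil, List.prod_cons, List.prod_nil]
      rw [volt_head_eq]
  | cons Ψ L' ih =>
    intro Θ hyp
    have hyp' : ∀ (A : List K) (a b : K) (B : List K),
        (Ψ :: L' : List K) = A ++ a :: b :: B → volt hpre a * volt hpre b ≠ 1 := by
      intro A a b B hAB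
      exact hyp (Θ :: A) a b B (by rw [hAB]; rfl)
    obtain ⟨tail, t, ht1, htail, hchain, hne, hprod⟩ := ih Ψ hyp'
    have hnc : volt hpre Θ * volt hpre Ψ ≠ 1 := hyp [] Θ Ψ L' rfl
    by_cases hcls : cls hpre Θ = cls hpre Ψ
    · -- merge into the head letter
      have hf : ¬ FacetRel r Ψ (rn Ψ) := by
        intro hf
        apply hnc
        have : voltC hpre (cls hpre Ψ) (eps hpre Θ + eps hpre Ψ) = 1 := by
          rw [voltC_eq_one_iff, dd_mk hpre, if_pos hf]
          rcases eps_mem hpre Θ with h1 | h1 <;> rcases eps_mem hpre Ψ with h2 | h2 <;>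
            rw [h1, h2] <;> decide
        rw [← voltC_mul] at this
        unfold volt
        rw [hcls]
        exact this
      have hdd : dd hpre (cls hpre Ψ) = 0 := by rw [dd_mk hpre, if_neg hf]
      have heps : eps hpre Θ = eps hpre Ψ := by
        by_contra hne'
        apply hnc
        have hsum : eps hpre Θ + eps hpre Ψ = 0 := by
          rcases eps_mem hpre Θ with h1 | h1 <;> rcases eps_mem hpre Ψ with h2 | h2 <;> omega
        unfold volt
        rw [hcls, voltC_mul, hsum, voltC_eq_one_iff]
        exact dvd_zero _
      rw [hcls, heps]
      refine ⟨tail, t + 1, by omega, htail, ?_, ?_, ?_⟩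
      · rcases tail with _ | ⟨l2, tail'⟩
        · exact List.isChain_singleton _
        · simp only [List.Chain', List.isChain_cons_cons] at hchain ⊢
          exact ⟨hchain.1, hchain.2⟩
      · intro h
        have hdvd := (ofAdd_cast_eq_one_iff hpre _ _).1 h
        rw [hdd] at hdvd
        rcases eps_mem hpre Ψ with h1 | h1 <;> rw [h1] at hdvd <;> simp at hdvd <;> omega
      · simp only [List.map_cons, List.prod_cons] at hprod ⊢
        have hsplit : ((t + 1) * eps hpre Ψ) = eps hpre Ψ + t * eps hpre Ψ := by ring
        rw [hsplit, Int.cast_add, ofAdd_add, map_mul, mul_assoc, hprod]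
        rw [show (CoprodI.of (M := Mfam hpre)
            (Multiplicative.ofAdd ((eps hpre Ψ : ZMod (dd hpre (cls hpre Ψ)))))) = volt hpre Ψ
          from rfl]
        rw [show volt hpre Θ = volt hpre Ψ by unfold volt; rw [hcls, heps]]
    · -- prepend a fresh letter
      refine ⟨⟨cls hpre Ψ,
          Multiplicative.ofAdd ((↑(t * eps hpre Ψ) : ZMod (dd hpre (cls hpre Ψ))))⟩ :: tail,
        1, le_refl 1, ?_, ?_, ?_, ?_⟩
      · intro l hl
        rcases List.mem_cons.1 hl with hl | hl
        · subst hl; exact hne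
        · exact htail l hl
      · exact List.isChain_cons_cons.2 ⟨hcls, hchain⟩
      · rw [one_mul]
        intro h
        have hdvd := (ofAdd_cast_eq_one_iff hpre _ _).1 h
        by_cases hf : FacetRel r Θ (rn Θ) <;>
          [rw [dd_mk hpre, if_pos hf] at hdvd; rw [dd_mk hpre, if_neg hf] at hdvd] <;>
          rcases eps_mem hpre Θ with h1 | h1 <;> rw [h1] at hdvd <;> norm_num at hdvd
      · simp only [List.map_cons, List.prod_cons] at hprod ⊢
        rw [one_mul, hprod]
        rw [show (CoprodI.of (M := Mfam hpre)
            (Multiplicative.ofAdd ((eps hpre Θ : ZMod (dd hpre (cls hpre Θ)))))) = volt hpre Θ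
          from rfl]

theorem extraction (hpre : IsPreExtender r rn) (L : List K)
    (hnc : ∀ (A : List K) (a b : K) (B : List K),
      L = A ++ a :: b :: B → volt hpre a * volt hpre b ≠ 1)
    (hprod : (L.map (volt hpre)).prod = 1) : L = [] := by
  classical
  rcases L with _ | ⟨Θ, L'⟩
  · rfl
  · exfalso
    obtain ⟨tail, t, _, htail, hchain, hne, hprod'⟩ := nep hpre L' Θ hnc
    set letter : Σ c, Mfam hpre c :=
      ⟨cls hpre Θ, Multiplicative.ofAdd ((↑(t * eps hpre Θ) : ZMod (dd hpre (cls hpre Θ))))⟩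
    let w : CoprodI.Word (Mfam hpre) :=
      { toList := letter :: tail
        ne_one := by
          intro l hl
          rcases List.mem_cons.1 hl with hl | hl
          · subst hl; exact hne
          · exact htail l hl
        chain_ne := hchain }
    have hw : w.prod = 1 := by
      show ((letter :: tail).map fun l => CoprodI.of l.2).prod = 1
      rw [hprod', hprod]
    have hemp : w = CoprodI.Word.empty := by
      apply (CoprodI.Word.equiv (M := Mfam hpre)).symm.injective
      show w.prod = CoprodI.Word.empty.prod
      rw [hw, CoprodI.Word.prod_empty]
    have : (letter :: tail : List _) = [] := by
      have := congrArg CoprodI.Word.toList hemp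
      simpa [w] using this
    simp at this

end Extract

/-! ### The universal voltage group and the homomorphism to the free product -/

section Univ
open Monoid
variable {rn : K → K}

theorem univRel_eq_one {w : FreeGroup K} (hw : w ∈ UnivRels r rn) :
    PresentedGroup.mk (UnivRels r rn) w = 1 :=
  (QuotientGroup.eq_one_iff w).2 (Subgroup.subset_normalClosure hw)

theorem xi_facet {Φ Ψ : K} (h : FacetRel r Φ Ψ) :
    univVoltage r rn Φ = univVoltage r rn Ψ := by
  have h1 : PresentedGroup.mk (UnivRels r rn) (FreeGroup.of Φ * (FreeGroup.of Ψ)⁻¹) = 1 :=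
    univRel_eq_one (Or.inl ⟨Φ, Ψ, h, rfl⟩)
  rw [map_mul, map_inv] at h1
  exact mul_inv_eq_one.1 h1

theorem xi_rn_mul (Φ : K) :
    univVoltage r rn Φ * univVoltage r rn (rn Φ) = 1 := by
  have h1 : PresentedGroup.mk (UnivRels r rn) (FreeGroup.of Φ * FreeGroup.of (rn Φ)) = 1 :=
    univRel_eq_one (Or.inr ⟨Φ, rfl⟩)
  rw [map_mul] at h1
  exact h1

theorem xi_cancel {a b : K} (h : FacetRel r a (rn b)) :
    univVoltage r rn a * univVoltage r rn b = 1 := by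
  have h1 : univVoltage r rn a = univVoltage r rn (rn b) := xi_facet h
  have h2 : univVoltage r rn (rn b) = (univVoltage r rn b)⁻¹ :=
    eq_inv_of_mul_eq_one_right (xi_rn_mul b)
  rw [h1, h2, inv_mul_cancel]

variable (hpre : IsPreExtender r rn)

/-- The comparison homomorphism from the universal voltage group to the free product. -/
noncomputable def psi : PresentedGroup (UnivRels r rn) →* CoprodI (Mfam hpre) :=
  PresentedGroup.toGroup (f := volt hpre) (by
    intro w hw
    rcases hw with ⟨Φ, Ψ, hFac, rfl⟩ | ⟨Φ, rfl⟩
    · rw [map_mul, map_inv, FreeGroup.lift_apply_of, FreeGroup.lift_apply_of, volt_facet hpre hFac,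
        mul_inv_cancel]
    · rw [map_mul, FreeGroup.lift_apply_of, FreeGroup.lift_apply_of]
      exact volt_rn_mul hpre Φ)

theorem psi_xi (Φ : K) : psi hpre (univVoltage r rn Φ) = volt hpre Φ :=
  PresentedGroup.toGroup.of _

end Univ

/-! ### Segment chains -/

section Seg
variable {K : Type*} {n : ℕ}

/-- `Seg r rn k L a b`: a path from `a` to `b` alternating between `⟨r_k, …, r_{n-1}⟩`-paths
and `rn`-steps, whose `rn`-steps happen at the flags listed in `L` (in order). -/
def Seg (r : Fin n → K → K) (rn : K → K) (k : ℕ) : List K → K → K → Prop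
  | [], a, b => ReachOn r (fun i => k ≤ (i : ℕ)) a b
  | Θ :: T, a, b => ReachOn r (fun i => k ≤ (i : ℕ)) a Θ ∧ Seg r rn k T (rn Θ) b

/-- Total voltage of a segment chain. -/
def wv (r : Fin n → K → K) (rn : K → K) : List K → PresentedGroup (UnivRels r rn)
  | [] => 1
  | Θ :: T => wv r rn T * univVoltage r rn Θ

variable {r : Fin n → K → K} {rn : K → K} {k : ℕ}

theorem seg_nil {a b : K} : Seg r rn k [] a b ↔ ReachOn r (fun i => k ≤ (i : ℕ)) a b :=
  Iff.rfl

theorem seg_cons {Θ : K} {T : List K} {a b : K} :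
    Seg r rn k (Θ :: T) a b ↔
      ReachOn r (fun i => k ≤ (i : ℕ)) a Θ ∧ Seg r rn k T (rn Θ) b :=
  Iff.rfl

theorem wv_nil : wv r rn [] = 1 := rfl

theorem wv_cons {Θ : K} {T : List K} :
    wv r rn (Θ :: T) = wv r rn T * univVoltage r rn Θ := rfl

theorem wv_append (A B : List K) : wv r rn (A ++ B) = wv r rn B * wv r rn A := by
  induction A with
  | nil => rw [List.nil_append, wv_nil, mul_one]
  | cons a A ih =>
    rw [List.cons_append, wv_cons, wv_cons, ih, mul_assoc]

theorem seg_extend {L : List K} {a b c : K} (h : Seg r rn k L a b)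
    (h2 : ReachOn r (fun i => k ≤ (i : ℕ)) b c) : Seg r rn k L a c := by
  induction L generalizing a with
  | nil => exact reach_trans h h2
  | cons Θ T ih => exact ⟨h.1, ih h.2⟩

theorem seg_prepend {L : List K} {x a b : K}
    (h : ReachOn r (fun i => k ≤ (i : ℕ)) x a) (h2 : Seg r rn k L a b) :
    Seg r rn k L x b := by
  cases L with
  | nil => exact reach_trans h h2
  | cons Θ T => exact ⟨reach_trans h h2.1, h2.2⟩

theorem seg_snoc {L : List K} {a b : K} (h : Seg r rn k L a b) :
    Seg r rn k (L ++ [b]) a (rn b) := by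
  induction L generalizing a with
  | nil => exact ⟨h, reach_refl⟩
  | cons Θ T ih => exact ⟨h.1, ih h.2⟩

end Seg

/-! ### The core splice argument -/

section Core
variable {rn : K → K} (hpre : IsPreExtender r rn) {k : ℕ}
include hpre

theorem facet_cap_reach (hpoly : IsPolytopal r) (hk1 : 1 ≤ k) (hkn : k < n) {u v : K}
    (hfac : FacetRel r u v) (hreach : ReachOn r (fun i => k ≤ (i : ℕ)) u v) :
    ReachOn r (fun i => k ≤ (i : ℕ) ∧ (i : ℕ) + 1 < n) u v := by
  by_cases hk2 : k + 1 < n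
  · have h := hpoly u v k (n - 2) (by omega) (by omega) hreach
      (reach_mono (fun i hi => by omega) hfac)
    exact reach_mono (fun i hi => ⟨hi.1, by omega⟩) h
  · have hk : k = n - 1 := by omega
    have horb := reach_orbit_single hpre.maniplex.invol (i0 := (⟨n - 1, by omega⟩ : Fin n))
      (fun i hi => Fin.ext (by have := i.isLt; simp only []; omega)) hreach
    rcases horb with h1 | h1
    · rw [h1]; exact reach_refl
    · have h2 := hpoly u v (n - 2) (n - 2) le_rfl (by omega)
        (reach_mono (fun i hi => by omega) hreach)
        (reach_mono (fun i hi => by omega) hfac)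
      have horb2 := reach_orbit_single hpre.maniplex.invol (i0 := (⟨n - 2, by omega⟩ : Fin n))
        (fun i hi => Fin.ext (by have := i.isLt; simp only []; omega)) h2
      rcases horb2 with h3 | h3
      · rw [h3]; exact reach_refl
      · exfalso
        have heq : r ⟨n - 1, by omega⟩ u = r ⟨n - 2, by omega⟩ u := by rw [← h1, ← h3]
        have : r ⟨n - 2, by omega⟩ (r ⟨n - 1, by omega⟩ u) = u := by
          rw [heq]; exact hpre.maniplex.invol _ u
        exact hpre.maniplex.fixfree₂ ⟨n - 2, by omega⟩ ⟨n - 1, by omega⟩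
          (by intro hcon; have := congrArg Fin.val hcon; simp only [] at this; omega) u this

theorem reach_mid_rn {u v : K}
    (h : ReachOn r (fun i => k ≤ (i : ℕ) ∧ (i : ℕ) + 1 < n) u v) :
    ReachOn r (fun i => k ≤ (i : ℕ) ∧ (i : ℕ) + 1 < n) (rn u) (rn v) :=
  reach_map (fun i hi x => hpre.rn_comm i hi.2 x) h

theorem seg_splice (hpoly : IsPolytopal r) (hk1 : 1 ≤ k) (hkn : k < n) {a' b' : K}
    (hfac : FacetRel r a' (rn b')) :
    ∀ (C : List K) (D : List K) (x y : K),
      Seg r rn k (C ++ b' :: a' :: D) x y → Seg r rn k (C ++ D) x y := by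
  intro C
  induction C with
  | nil =>
    intro D x y hseg
    obtain ⟨h1, h2, h3⟩ := hseg
    have hfac' : FacetRel r (rn b') a' := facet_symm hpre hfac
    have hmid := facet_cap_reach hpre hpoly hk1 hkn hfac' h2
    have hmid2 := reach_mid_rn hpre hmid
    rw [hpre.rn_invol] at hmid2
    have hx : ReachOn r (fun i => k ≤ (i : ℕ)) x (rn a') :=
      reach_trans h1 (reach_mono (fun i hi => hi.1) hmid2)
    rw [List.nil_append]
    exact seg_prepend hx h3
  | cons c C' ih =>
    intro D x y hseg
    exact ⟨hseg.1, ih D _ _ hseg.2⟩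

theorem psi_wv (L : List K) :
    psi hpre (wv r rn L) = ((L.reverse.map (volt hpre)).prod) := by
  induction L with
  | nil => rw [wv_nil, map_one]; simp
  | cons Θ T ih =>
    rw [wv_cons, map_mul, ih, psi_xi]
    simp [List.prod_append]

theorem segB (hpoly : IsPolytopal r) (hk1 : 1 ≤ k) (hkn : k < n) :
    ∀ (m : ℕ) (L : List K), L.length ≤ m → ∀ x y : K, Seg r rn k L x y →
      wv r rn L = 1 → ReachOn r (fun i => k ≤ (i : ℕ)) x y := by
  intro m
  induction m with
  | zero =>
    intro L hL x y hseg _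
    have hL0 : L = [] := List.length_eq_zero_iff.1 (by omega)
    subst hL0
    exact hseg
  | succ m ih =>
    intro L hL x y hseg hw
    by_cases hL0 : L = []
    · subst hL0; exact hseg
    · have hψ : ((L.reverse.map (volt hpre)).prod) = 1 := by
        rw [← psi_wv hpre L, hw, map_one]
      have hne : L.reverse ≠ [] := by simpa using hL0
      have hcantail : ¬ (∀ (A : List K) (a b : K) (B : List K),
          L.reverse = A ++ a :: b :: B → volt hpre a * volt hpre b ≠ 1) := by
        intro hno
        exact hne (extraction hpre _ hno hψ)
      push_neg at hcantail
      obtain ⟨A, a', b', B, hsplit, hcan⟩ := hcantail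
      have hfac : FacetRel r a' (rn b') := volt_cancel hpre hcan
      have hL' : L = B.reverse ++ b' :: a' :: A.reverse := by
        have h0 := congrArg List.reverse hsplit
        rw [List.reverse_reverse] at h0
        rw [h0]
        simp
      rw [hL'] at hseg hw
      have hseg2 := seg_splice hpre hpoly hk1 hkn hfac B.reverse A.reverse x y hseg
      have hw2 : wv r rn (B.reverse ++ A.reverse) = 1 := by
        rw [wv_append]
        rw [wv_append, wv_cons, wv_cons] at hw
        rw [mul_assoc (wv r rn A.reverse), xi_cancel hfac, mul_one] at hw
        exact hw
      refine ih (B.reverse ++ A.reverse) ?_ x y hseg2 hw2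
      have := congrArg List.length hL'
      simp at this ⊢
      omega

end Core

/-! ### The derived graph -/

section Derived
variable {rn : K → K}

local notation "G" => PresentedGroup (UnivRels r rn)
local notation "ξ" => univVoltage r rn
local notation "ss" => derivedMono r rn (univVoltage r rn)

theorem derived_step_lt (i : Fin (n + 1)) (h : (i : ℕ) < n) (p : K × G) :
    ss i p = (r ⟨(i : ℕ), h⟩ p.1, p.2) := by
  simp only [derivedMono, dif_pos h]

theorem derived_step_n (i : Fin (n + 1)) (h : ¬ (i : ℕ) < n) (p : K × G) :
    ss i p = (rn p.1, ξ p.1 * p.2) := by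
  simp only [derivedMono, dif_neg h]

theorem lift_up {P : ℕ → Prop} (hP : ∀ m, P m → m < n) {a b : K} (g : G)
    (h : ReachOn r (fun i => P (i : ℕ)) a b) :
    ReachOn ss (fun i => P (i : ℕ)) (a, g) (b, g) := by
  induction h with
  | refl => exact reach_refl
  | tail _ step ih =>
    obtain ⟨i, hi, he⟩ := step
    refine ih.tail ⟨⟨(i : ℕ), by omega⟩, hi, ?_⟩
    rw [derived_step_lt _ (by simpa using i.isLt)]
    simp only [Fin.eta]
    rw [he]

theorem push_down {P : ℕ → Prop} (hP : ∀ m, P m → m < n) {a : K} {g : G} {y : K × G}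
    (h : ReachOn ss (fun i => P (i : ℕ)) (a, g) y) :
    y.2 = g ∧ ReachOn r (fun i => P (i : ℕ)) a y.1 := by
  induction h with
  | refl => exact ⟨rfl, reach_refl⟩
  | tail _ step ih =>
    obtain ⟨i, hi, he⟩ := step
    subst he
    have hlt : (i : ℕ) < n := hP _ hi
    rw [derived_step_lt i hlt]
    exact ⟨ih.1, ih.2.tail ⟨⟨(i : ℕ), hlt⟩, hi, rfl⟩⟩

theorem dec {k : ℕ} {a : K} {g : G} {y : K × G}
    (h : ReachOn ss (fun i => k ≤ (i : ℕ)) (a, g) y) :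
    ∃ L : List K, Seg r rn k L a y.1 ∧ y.2 = wv r rn L * g := by
  induction h with
  | refl => exact ⟨[], reach_refl, (one_mul g).symm⟩
  | tail _ step ih =>
    obtain ⟨L, hseg, hg⟩ := ih
    obtain ⟨i, hi, he⟩ := step
    subst he
    by_cases hlt : (i : ℕ) < n
    · rw [derived_step_lt i hlt]
      refine ⟨L, seg_extend hseg (reach_single (i := ⟨(i : ℕ), hlt⟩) hi), hg⟩
    · rw [derived_step_n i hlt]
      refine ⟨L ++ [_], seg_snoc hseg, ?_⟩
      rw [wv_append, wv_cons, wv_nil, one_mul, hg, mul_assoc]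

end Derived
end St9

open St9 in
theorem statement9_aux {K : Type*} {n : ℕ} (r : Fin n → K → K) (rn : K → K)
    (hpre : IsPreExtender r rn) (hpoly : IsPolytopal r) :
    IsPolytopal (derivedMono r rn (univVoltage r rn)) := by
  classical
  intro x y k l hkl hl hge hle
  obtain ⟨x1, x2⟩ := x
  obtain ⟨y1, y2⟩ := y
  by_cases hln : l < n
  · obtain ⟨hy2, hKle⟩ := push_down (P := fun m => m ≤ l) (fun m hm => by omega) hle
    rcases Nat.eq_zero_or_pos k with hk0 | hk1
    · subst hk0
      exact reach_mono (fun i hi => ⟨Nat.zero_le _, hi⟩) hle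
    · obtain ⟨L, hseg, hwv⟩ := dec hge
      have hwv1 : wv r rn L = 1 := by
        have h0 : wv r rn L * x2 = 1 * x2 := by
          rw [one_mul, ← hwv]
          exact hy2
        exact mul_right_cancel h0
      have hK : ReachOn r (fun i => k ≤ (i : ℕ)) x1 y1 :=
        segB hpre hpoly hk1 (by omega) L.length L le_rfl x1 y1 hseg hwv1
      have hmid := hpoly x1 y1 k l hkl hln hK hKle
      have hlift := lift_up (rn := rn) (P := fun m => k ≤ m ∧ m ≤ l)
        (fun m hm => by omega) x2 hmid
      rw [show (y2 : PresentedGroup (UnivRels r rn)) = x2 from hy2]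
      exact hlift
  · refine reach_mono (fun i hi => ⟨hi, ?_⟩) hge
    have := i.isLt
    omega






/-- If `K` is polytopal, then the universal Cayley extension `U(K, r_n)`
(the derived graph over the universal voltage group `G(K, r_n)`) is polytopal. -/
theorem statement9 {K : Type*} {n : ℕ} (r : Fin n → K → K) (rn : K → K)
    (hpre : IsPreExtender r rn) (hpoly : IsPolytopal r) :
    IsPolytopal (derivedMono r rn (univVoltage r rn)) := by
  exact statement9_aux r rn hpre hpoly
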